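/- Let (s_j)_{j=0}^κ be complex p×q matrices with reciprocal sequence (r_j). For n ∈ ℕ₀ with 2n+2 ≤ κ, let G_n^♯ = (r_{j+k+2})_{j,k=0}^n, let G_n = (s_{j+k+2})_{j,k=0}^n, and let L_{n+1} = G_n − y₁ s₀⁺ z₁, where y₁ = col(s₁,…,s_{n+1}) and z₁ = row(s₁,…,s_{n+1}) (so L_{n+1} is the Schur complement of s₀ in the Hankel matrix H_{n+1}). Then G_n^♯ = −S_n^♯ L_{n+1} 𝕊_n^♯, where S_n^♯ and 𝕊_n^♯ are the lower and upper triangular block Toeplitz matrices of (r_j). -/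
import Mathlib


open Matrix

/-- `X` is the Moore–Penrose inverse of `A`. -/
def IsMPInv {m n : Type*} [Fintype m] [Fintype n]
    (A : Matrix m n ℂ) (X : Matrix n m ℂ) : Prop :=
  A * X * A = A ∧ X * A * X = X ∧ (A * X)ᴴ = A * X ∧ (X * A)ᴴ = X * A

/-- The lower triangular block Toeplitz matrix built from a sequence. -/
def toepL {p q : ℕ} (s : ℕ → Matrix (Fin p) (Fin q) ℂ) (m : ℕ) :
    Matrix (Fin (m+1) × Fin p) (Fin (m+1) × Fin q) ℂ :=
  Matrix.of fun a b =>
    if (b.1 : ℕ) ≤ (a.1 : ℕ) then s ((a.1 : ℕ) - (b.1 : ℕ)) a.2 b.2 else 0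

/-- The upper triangular block Toeplitz matrix built from a sequence. -/
def toepU {p q : ℕ} (s : ℕ → Matrix (Fin p) (Fin q) ℂ) (m : ℕ) :
    Matrix (Fin (m+1) × Fin p) (Fin (m+1) × Fin q) ℂ :=
  Matrix.of fun a b =>
    if (a.1 : ℕ) ≤ (b.1 : ℕ) then s ((b.1 : ℕ) - (a.1 : ℕ)) a.2 b.2 else 0

/-- The block Hankel matrix `(s_{j+k+d})_{j,k=0}^n` built from a sequence
(`d = 0` gives `H_n`, `d = 1` gives `K_n`, `d = 2` gives `G_n`). -/
def hank {p q : ℕ} (s : ℕ → Matrix (Fin p) (Fin q) ℂ) (d n : ℕ) :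
    Matrix (Fin (n+1) × Fin p) (Fin (n+1) × Fin q) ℂ :=
  Matrix.of fun a b => s ((a.1 : ℕ) + (b.1 : ℕ) + d) a.2 b.2

/-! ### Auxiliary lemmas -/

/-- Triangle sum reindexing. -/
lemma aux_tri_sum {M : Type*} [AddCommMonoid M] (u : ℕ) (G : ℕ → ℕ → M) :
    ∑ i ∈ Finset.range u, ∑ ℓ ∈ Finset.range (i+1), G ℓ (i - ℓ) =
    ∑ a ∈ Finset.range u, ∑ ℓ ∈ Finset.range (u - a), G ℓ a := by
  induction u with
  | zero => simp
  | succ u ih =>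
    have hre : ∑ a ∈ Finset.range (u+1), G (u - a) a
        = ∑ ℓ ∈ Finset.range (u+1), G ℓ (u - ℓ) := by
      have hre := Finset.sum_range_reflect (fun ℓ => G ℓ (u - ℓ)) (u+1)
      have h : ∀ j ∈ Finset.range (u+1), G (u + 1 - 1 - j) (u - (u + 1 - 1 - j)) = G (u - j) j := by
        intro j hj; rw [Finset.mem_range] at hj
        congr 1
        omega
      rw [Finset.sum_congr rfl h] at hre
      exact hre
    have h1 : ∀ a ∈ Finset.range (u+1), ∑ ℓ ∈ Finset.range (u + 1 - a), G ℓ a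
        = ∑ ℓ ∈ Finset.range (u - a), G ℓ a + G (u - a) a := by
      intro a ha
      rw [Finset.mem_range] at ha
      have : u + 1 - a = (u - a) + 1 := by omega
      rw [this, Finset.sum_range_succ]
    rw [Finset.sum_range_succ, ih, Finset.sum_congr rfl h1, Finset.sum_add_distrib, hre,
      Finset.sum_range_succ (fun a => ∑ ℓ ∈ Finset.range (u - a), G ℓ a), Nat.sub_self]
    simp

lemma aux_sum_reflect {M : Type*} [AddCommMonoid M] (n : ℕ) (g : ℕ → M) :
    ∑ a ∈ Finset.range (n+1), g (n - a) = ∑ a ∈ Finset.range (n+1), g a :=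
  Finset.sum_range_reflect g (n+1)

lemma aux_fin_ite_sum {M : Type*} [AddCommMonoid M] (n j : ℕ) (hj : j ≤ n) (f : ℕ → M) :
    ∑ a : Fin (n+1), (if (a : ℕ) ≤ j then f (a : ℕ) else 0)
      = ∑ a ∈ Finset.range (j+1), f a := by
  rw [Fin.sum_univ_eq_sum_range (fun a => if a ≤ j then f a else 0) (n+1)]
  rw [← Finset.sum_subset (Finset.range_subset_range.2 (by omega : j + 1 ≤ n + 1))
    (fun x _ hx => by
      rw [Finset.mem_range] at hx
      rw [if_neg (by omega)])]
  exact Finset.sum_congr rfl fun a ha => by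
    rw [Finset.mem_range] at ha
    rw [if_pos (by omega)]

section seqAux

variable {p q : ℕ} (κ : ℕ)
  (s : ℕ → Matrix (Fin p) (Fin q) ℂ)
  (sInv : Matrix (Fin q) (Fin p) ℂ)
  (r : ℕ → Matrix (Fin q) (Fin p) ℂ)
  (hmp : sInv * s 0 * sInv = sInv)
  (hr0 : r 0 = sInv)
  (hr : ∀ j, 1 ≤ j → j ≤ κ →
      r j = -(sInv * ∑ ℓ ∈ Finset.range j, s (j - ℓ) * r ℓ))

include hmp hr0 hr

set_option linter.unusedSectionVars false

/-- `s₀⁺ s₀ r_j = r_j`. -/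
lemma aux_hrs_left : ∀ j, j ≤ κ → sInv * (s 0 * r j) = r j := by
  intro j hj
  rcases Nat.eq_zero_or_pos j with h0 | h1
  · subst h0; rw [hr0, ← Matrix.mul_assoc, hmp]
  · rw [hr j h1 hj, Matrix.mul_neg, Matrix.mul_neg, ← Matrix.mul_assoc,
      ← Matrix.mul_assoc, hmp]

/-- `r_j s₀ s₀⁺ = r_j`. -/
lemma aux_hrs_right : ∀ j, j ≤ κ → r j * (s 0 * sInv) = r j := by
  intro j
  induction j using Nat.strong_induction_on with
  | _ j ih =>
    intro hj
    rcases Nat.eq_zero_or_pos j with h0 | h1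
    · subst h0; rw [hr0, ← Matrix.mul_assoc, hmp]
    · rw [hr j h1 hj, Matrix.neg_mul, Matrix.mul_assoc, Matrix.sum_mul]
      congr 2
      refine Finset.sum_congr rfl fun ℓ hℓ => ?_
      rw [Finset.mem_range] at hℓ
      rw [Matrix.mul_assoc, ih ℓ hℓ (le_trans (le_of_lt hℓ) hj)]

/-- `s₀⁺ u_t = 0` for `1 ≤ t ≤ κ`. -/
lemma aux_hu : ∀ t, 1 ≤ t → t ≤ κ →
    sInv * ∑ ℓ ∈ Finset.range (t+1), s (t - ℓ) * r ℓ = 0 := by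
  intro t h1 ht
  rw [Finset.sum_range_succ, Nat.sub_self, Matrix.mul_add,
    aux_hrs_left κ s sInv r hmp hr0 hr t ht]
  have := hr t h1 ht
  have h2 : sInv * ∑ ℓ ∈ Finset.range t, s (t - ℓ) * r ℓ = -r t := by
    rw [this, neg_neg]
  rw [h2, neg_add_cancel]

/-- the dual (right) recursion for the reciprocal sequence -/
lemma aux_hdual : ∀ t, 1 ≤ t → t ≤ κ →
    (∑ ℓ ∈ Finset.range t, r ℓ * s (t - ℓ)) * sInv = -r t := by
  intro t
  induction t using Nat.strong_induction_on with
  | _ t ih =>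
    intro h1 ht
    obtain ⟨u, rfl⟩ : ∃ u, t = u + 1 := ⟨t - 1, by omega⟩
    rw [Matrix.sum_mul, Finset.sum_range_succ']
    set G : ℕ → ℕ → Matrix (Fin p) (Fin p) ℂ :=
      fun ℓ a => s (a+1) * (r ℓ * (s (u - ℓ - a) * sInv)) with hG
    have hstep : ∀ i ∈ Finset.range u,
        r (i+1) * s (u + 1 - (i+1)) * sInv =
        -(sInv * ∑ ℓ ∈ Finset.range (i+1), G ℓ (i - ℓ)) := by
      intro i hi
      rw [Finset.mem_range] at hi
      rw [hr (i+1) (by omega) (by omega), Matrix.neg_mul, Matrix.neg_mul,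
        Matrix.mul_assoc, Matrix.mul_assoc, Matrix.sum_mul]
      congr 2
      refine Finset.sum_congr rfl fun ℓ hℓ => ?_
      rw [Finset.mem_range] at hℓ
      simp only [hG]
      rw [show i + 1 - ℓ = (i - ℓ) + 1 by omega,
        show u + 1 - (i + 1) = u - ℓ - (i - ℓ) by omega, Matrix.mul_assoc]
    rw [Finset.sum_congr rfl hstep, Finset.sum_neg_distrib, ← Matrix.mul_sum,
      aux_tri_sum u G]
    have hinner : ∀ a ∈ Finset.range u,
        ∑ ℓ ∈ Finset.range (u - a), G ℓ a = -(s (a+1) * r (u - a)) := by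
      intro a ha
      rw [Finset.mem_range] at ha
      have : ∑ ℓ ∈ Finset.range (u - a), G ℓ a
          = s (a+1) * ((∑ ℓ ∈ Finset.range (u - a), r ℓ * s (u - a - ℓ)) * sInv) := by
        rw [Matrix.sum_mul, Matrix.mul_sum]
        refine Finset.sum_congr rfl fun ℓ hℓ => ?_
        rw [Finset.mem_range] at hℓ
        simp only [hG]
        rw [show u - ℓ - a = u - a - ℓ by omega, Matrix.mul_assoc]
      rw [this, ih (u - a) (by omega) (by omega) (by omega), Matrix.mul_neg]
    rw [Finset.sum_congr rfl hinner, Finset.sum_neg_distrib, Matrix.mul_neg, neg_neg]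
    have hrt : -r (u+1) = sInv * ∑ ℓ ∈ Finset.range (u+1), s (u + 1 - ℓ) * r ℓ := by
      rw [hr (u+1) (by omega) ht, neg_neg]
    rw [hrt, Finset.sum_range_succ', Matrix.mul_add]
    congr 1
    · congr 1
      have := Finset.sum_range_reflect (fun a => s (a+1) * r (u - a)) u
      rw [← this]
      refine Finset.sum_congr rfl fun j hj => ?_
      rw [Finset.mem_range] at hj
      rw [show u - 1 - j + 1 = u + 1 - (j+1) by omega,
        show u - (u - 1 - j) = j + 1 by omega]
    · rw [hr0, Nat.sub_zero, ← Matrix.mul_assoc]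

/-- `sInv * (partial sum up to K) = -r (K+1)` -/
lemma aux_hpartial : ∀ K, K + 1 ≤ κ →
    sInv * ∑ c ∈ Finset.range (K+1), s (K + 1 - c) * r c = -r (K+1) := by
  intro K hκ
  have h := aux_hu κ s sInv r hmp hr0 hr (K+1) (by omega) hκ
  rw [Finset.sum_range_succ, Nat.sub_self, Matrix.mul_add] at h
  have h2 := aux_hrs_left κ s sInv r hmp hr0 hr (K+1) hκ
  rw [h2] at h
  exact eq_neg_of_add_eq_zero_left h

lemma aux_rect : ∀ J K, 1 ≤ K → J + K + 1 ≤ κ →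
    ∑ d ∈ Finset.range (J+1), ∑ c ∈ Finset.range (K+1),
      r d * s (J + K + 1 - d - c) * r c = -r (J + K + 1) := by
  intro J
  induction J with
  | zero =>
    intro K hK hκ
    rw [Finset.sum_range_one]
    simp only [zero_add, Nat.zero_sub, Nat.sub_zero]
    have h1 : ∑ c ∈ Finset.range (K+1), r 0 * s (K + 1 - c) * r c
        = sInv * ∑ c ∈ Finset.range (K+1), s (K + 1 - c) * r c := by
      rw [Matrix.mul_sum]
      exact Finset.sum_congr rfl fun c _ => by rw [hr0, Matrix.mul_assoc]
    rw [h1, aux_hpartial κ s sInv r hmp hr0 hr K (by omega)]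
  | succ J ihJ =>
    intro K hK hκ
    have ih := ihJ (K+1) (by omega) (by omega)
    rw [show J + (K+1) + 1 = J + K + 2 by omega] at ih
    rw [show J + 1 + K + 1 = J + K + 2 by omega]
    have hsplit : ∑ d ∈ Finset.range (J+1), ∑ c ∈ Finset.range (K+1+1),
          r d * s (J + K + 2 - d - c) * r c
        = (∑ d ∈ Finset.range (J+1), ∑ c ∈ Finset.range (K+1),
            r d * s (J + K + 2 - d - c) * r c)
          + ∑ d ∈ Finset.range (J+1), r d * s (J + K + 2 - d - (K+1)) * r (K+1) := by
      rw [← Finset.sum_add_distrib]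
      exact Finset.sum_congr rfl fun d _ => Finset.sum_range_succ _ _
    rw [hsplit] at ih
    have hB : ∑ d ∈ Finset.range (J+1), r d * s (J + K + 2 - d - (K+1)) * r (K+1)
        = -(r (J+1) * (s 0 * r (K+1))) := by
      have h2 : ∀ d ∈ Finset.range (J+1), r d * s (J + K + 2 - d - (K+1)) * r (K+1)
          = r d * s (J + 1 - d) * r (K+1) := by
        intro d hd
        rw [Finset.mem_range] at hd
        rw [show J + K + 2 - d - (K+1) = J + 1 - d by omega]
      rw [Finset.sum_congr rfl h2, ← Matrix.sum_mul,
        ← aux_hrs_left κ s sInv r hmp hr0 hr (K+1) (by omega), ← Matrix.mul_assoc,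
        aux_hdual κ s sInv r hmp hr0 hr (J+1) (by omega) (by omega), Matrix.neg_mul,
        aux_hrs_left κ s sInv r hmp hr0 hr (K+1) (by omega)]
    rw [hB] at ih
    rw [Finset.sum_range_succ]
    have hA : ∑ c ∈ Finset.range (K+1), r (J+1) * s (J + K + 2 - (J+1) - c) * r c
        = -(r (J+1) * (s 0 * r (K+1))) := by
      rw [show J + K + 2 - (J+1) = K + 1 by omega]
      have h3 : ∑ c ∈ Finset.range (K+1), r (J+1) * s (K + 1 - c) * r c
          = r (J+1) * ∑ c ∈ Finset.range (K+1), s (K + 1 - c) * r c := by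
        rw [Matrix.mul_sum]
        exact Finset.sum_congr rfl fun c _ => by rw [Matrix.mul_assoc]
      rw [h3, ← aux_hrs_right κ s sInv r hmp hr0 hr (J+1) (by omega), Matrix.mul_assoc,
        Matrix.mul_assoc, aux_hpartial κ s sInv r hmp hr0 hr K (by omega),
        Matrix.mul_neg, Matrix.mul_neg, ← Matrix.mul_assoc]
      rw [aux_hrs_right κ s sInv r hmp hr0 hr (J+1) (by omega), Matrix.mul_assoc]
    rw [hA]
    exact ih

lemma aux_main_seq (j k : ℕ) (h : j + k + 2 ≤ κ) :
    r (j + k + 2) =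
      -∑ a ∈ Finset.range (j+1), ∑ b ∈ Finset.range (k+1),
        r (j - a) * (s (a + b + 2) - s (a+1) * sInv * s (b+1)) * r (k - b) := by
  simp only [Matrix.mul_sub, Matrix.sub_mul, Finset.sum_sub_distrib]
  have hS : ∑ a ∈ Finset.range (j+1), ∑ b ∈ Finset.range (k+1),
        r (j - a) * s (a + b + 2) * r (k - b)
      = ∑ d ∈ Finset.range (j+1), ∑ c ∈ Finset.range (k+1),
        r d * s (j + k + 2 - d - c) * r c := by
    rw [← aux_sum_reflect j (fun d => ∑ c ∈ Finset.range (k+1),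
      r d * s (j + k + 2 - d - c) * r c)]
    refine Finset.sum_congr rfl fun a ha => ?_
    rw [Finset.mem_range] at ha
    rw [← aux_sum_reflect k (fun c => r (j - a) * s (j + k + 2 - (j - a) - c) * r c)]
    refine Finset.sum_congr rfl fun b hb => ?_
    rw [Finset.mem_range] at hb
    rw [show j + k + 2 - (j - a) - (k - b) = a + b + 2 by omega]
  have hrect := aux_rect κ s sInv r hmp hr0 hr j (k+1) (by omega) (by omega)
  rw [show j + (k+1) + 1 = j + k + 2 by omega] at hrect
  have hsplit : ∑ d ∈ Finset.range (j+1), ∑ c ∈ Finset.range (k+1+1),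
        r d * s (j + k + 2 - d - c) * r c
      = (∑ d ∈ Finset.range (j+1), ∑ c ∈ Finset.range (k+1),
          r d * s (j + k + 2 - d - c) * r c)
        + ∑ d ∈ Finset.range (j+1), r d * s (j + k + 2 - d - (k+1)) * r (k+1) := by
    rw [← Finset.sum_add_distrib]
    exact Finset.sum_congr rfl fun d _ => Finset.sum_range_succ _ _
  rw [hsplit] at hrect
  have hB : ∑ d ∈ Finset.range (j+1), r d * s (j + k + 2 - d - (k+1)) * r (k+1)
      = -(r (j+1) * (s 0 * r (k+1))) := by
    have h2 : ∀ d ∈ Finset.range (j+1), r d * s (j + k + 2 - d - (k+1)) * r (k+1)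
        = r d * s (j + 1 - d) * r (k+1) := by
      intro d hd
      rw [Finset.mem_range] at hd
      rw [show j + k + 2 - d - (k+1) = j + 1 - d by omega]
    rw [Finset.sum_congr rfl h2, ← Matrix.sum_mul,
      ← aux_hrs_left κ s sInv r hmp hr0 hr (k+1) (by omega), ← Matrix.mul_assoc,
      aux_hdual κ s sInv r hmp hr0 hr (j+1) (by omega) (by omega), Matrix.neg_mul,
      aux_hrs_left κ s sInv r hmp hr0 hr (k+1) (by omega)]
  rw [hB] at hrect
  have hT : ∑ a ∈ Finset.range (j+1), ∑ b ∈ Finset.range (k+1),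
        r (j - a) * (s (a+1) * sInv * s (b+1)) * r (k - b)
      = r (j+1) * (s 0 * r (k+1)) := by
    have hWV : ∑ a ∈ Finset.range (j+1), ∑ b ∈ Finset.range (k+1),
          r (j - a) * (s (a+1) * sInv * s (b+1)) * r (k - b)
        = (∑ a ∈ Finset.range (j+1), r (j - a) * s (a+1)) *
          (sInv * ∑ b ∈ Finset.range (k+1), s (b+1) * r (k - b)) := by
      rw [Matrix.sum_mul]
      refine Finset.sum_congr rfl fun a _ => ?_
      rw [Matrix.mul_sum, Matrix.mul_sum]
      refine Finset.sum_congr rfl fun b _ => ?_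
      simp only [Matrix.mul_assoc]
    have hW : ∑ a ∈ Finset.range (j+1), r (j - a) * s (a+1)
        = ∑ d ∈ Finset.range (j+1), r d * s (j + 1 - d) := by
      rw [← aux_sum_reflect j (fun d => r d * s (j + 1 - d))]
      refine Finset.sum_congr rfl fun a ha => ?_
      rw [Finset.mem_range] at ha
      rw [show j + 1 - (j - a) = a + 1 by omega]
    have hV : ∑ b ∈ Finset.range (k+1), s (b+1) * r (k - b)
        = ∑ c ∈ Finset.range (k+1), s (k + 1 - c) * r c := by
      rw [← aux_sum_reflect k (fun c => s (k + 1 - c) * r c)]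
      refine Finset.sum_congr rfl fun b hb => ?_
      rw [Finset.mem_range] at hb
      rw [show k + 1 - (k - b) = b + 1 by omega]
    rw [hWV, hW, hV, aux_hpartial κ s sInv r hmp hr0 hr k (by omega), Matrix.mul_neg,
      ← aux_hrs_left κ s sInv r hmp hr0 hr (k+1) (by omega), ← Matrix.mul_assoc,
      aux_hdual κ s sInv r hmp hr0 hr (j+1) (by omega) (by omega), Matrix.neg_mul, neg_neg,
      aux_hrs_left κ s sInv r hmp hr0 hr (k+1) (by omega)]
  rw [hS, hT, sub_eq_add_neg, hrect, neg_neg]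

end seqAux

/-- G_n^♯ = −S_n^♯ L_{n+1} 𝕊_n^♯, where L_{n+1} = G_n − y₁ s₀⁺ z₁ is the Schur
complement of s₀ in H_{n+1}. -/
theorem hankelG_reciprocal {p q : ℕ} (κ n : ℕ) (hn : 2 * n + 2 ≤ κ)
    (s : ℕ → Matrix (Fin p) (Fin q) ℂ)
    (sInv : Matrix (Fin q) (Fin p) ℂ) (hs : IsMPInv (s 0) sInv)
    (r : ℕ → Matrix (Fin q) (Fin p) ℂ)
    (hr0 : r 0 = sInv)
    (hr : ∀ j, 1 ≤ j → j ≤ κ →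
      r j = -(sInv * ∑ ℓ ∈ Finset.range j, s (j - ℓ) * r ℓ)) :
    hank r 2 n =
      -(toepL r n *
        (hank s 2 n -
          (Matrix.of fun (a : Fin (n+1) × Fin p) (c : Fin q) => s ((a.1 : ℕ) + 1) a.2 c) *
            sInv *
          (Matrix.of fun (i : Fin p) (b : Fin (n+1) × Fin q) => s ((b.1 : ℕ) + 1) i b.2)) *
        toepU r n) := by
  have hmp : sInv * s 0 * sInv = sInv := hs.2.1
  ext ⟨j, x⟩ ⟨k, y⟩
  have hj := j.2
  have hk := k.2
  have hjk : (j : ℕ) + (k : ℕ) + 2 ≤ κ := by omega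
  have hE : (toepL r n *
        (hank s 2 n -
          (Matrix.of fun (a : Fin (n+1) × Fin p) (c : Fin q) => s ((a.1 : ℕ) + 1) a.2 c) *
            sInv *
          (Matrix.of fun (i : Fin p) (b : Fin (n+1) × Fin q) => s ((b.1 : ℕ) + 1) i b.2)) *
        toepU r n) (j, x) (k, y)
      = ∑ a ∈ Finset.range ((j : ℕ)+1), ∑ b ∈ Finset.range ((k : ℕ)+1),
          (r ((j : ℕ) - a) * (s (a + b + 2) - s (a+1) * sInv * s (b+1)) * r ((k : ℕ) - b)) x y := by
    set MID := (hank s 2 n -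
            (Matrix.of fun (a : Fin (n+1) × Fin p) (c : Fin q) => s ((a.1 : ℕ) + 1) a.2 c) *
              sInv *
            (Matrix.of fun (i : Fin p) (b : Fin (n+1) × Fin q) => s ((b.1 : ℕ) + 1) i b.2)) with hMID
    have e1 : (toepL r n * MID * toepU r n) (j, x) (k, y)
        = ∑ b : Fin (n+1), ∑ v : Fin q, ∑ a : Fin (n+1), ∑ u : Fin p,
            toepL r n (j, x) (a, u) * MID (a, u) (b, v) * toepU r n (b, v) (k, y) := by
      rw [Matrix.mul_apply, Fintype.sum_prod_type]
      refine Finset.sum_congr rfl fun b _ => Finset.sum_congr rfl fun v _ => ?_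
      rw [Matrix.mul_apply, Finset.sum_mul, Fintype.sum_prod_type]
    have e2 : ∑ b : Fin (n+1), ∑ v : Fin q, ∑ a : Fin (n+1), ∑ u : Fin p,
            toepL r n (j, x) (a, u) * MID (a, u) (b, v) * toepU r n (b, v) (k, y)
        = ∑ a : Fin (n+1), ∑ b : Fin (n+1), ∑ v : Fin q, ∑ u : Fin p,
            toepL r n (j, x) (a, u) * MID (a, u) (b, v) * toepU r n (b, v) (k, y) := by
      calc ∑ b : Fin (n+1), ∑ v : Fin q, ∑ a : Fin (n+1), ∑ u : Fin p,
            toepL r n (j, x) (a, u) * MID (a, u) (b, v) * toepU r n (b, v) (k, y)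
          = ∑ b : Fin (n+1), ∑ a : Fin (n+1), ∑ v : Fin q, ∑ u : Fin p,
            toepL r n (j, x) (a, u) * MID (a, u) (b, v) * toepU r n (b, v) (k, y) :=
            Finset.sum_congr rfl fun b _ => Finset.sum_comm
        _ = ∑ a : Fin (n+1), ∑ b : Fin (n+1), ∑ v : Fin q, ∑ u : Fin p,
            toepL r n (j, x) (a, u) * MID (a, u) (b, v) * toepU r n (b, v) (k, y) :=
            Finset.sum_comm
    have e3 : ∀ (a b : Fin (n+1)), ∑ v : Fin q, ∑ u : Fin p,
            toepL r n (j, x) (a, u) * MID (a, u) (b, v) * toepU r n (b, v) (k, y)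
        = if (a : ℕ) ≤ (j : ℕ) then (if (b : ℕ) ≤ (k : ℕ) then
            (r ((j : ℕ) - (a : ℕ)) * (s ((a : ℕ) + (b : ℕ) + 2)
              - s ((a : ℕ)+1) * sInv * s ((b : ℕ)+1)) * r ((k : ℕ) - (b : ℕ))) x y
            else 0) else 0 := by
      intro a b
      by_cases haj : (a : ℕ) ≤ (j : ℕ)
      · by_cases hbk : (b : ℕ) ≤ (k : ℕ)
        · rw [if_pos haj, if_pos hbk]
          conv_rhs => rw [Matrix.mul_apply]
          refine Finset.sum_congr rfl fun v _ => ?_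
          conv_rhs => rw [Matrix.mul_apply, Finset.sum_mul]
          refine Finset.sum_congr rfl fun u _ => ?_
          simp only [toepL, toepU, hMID, hank, Matrix.of_apply, Matrix.sub_apply,
            Matrix.mul_apply, if_pos haj, if_pos hbk]
        · rw [if_pos haj, if_neg hbk]
          refine Finset.sum_eq_zero fun v _ => Finset.sum_eq_zero fun u _ => ?_
          simp only [toepU, Matrix.of_apply]
          rw [if_neg hbk, mul_zero]
      · rw [if_neg haj]
        refine Finset.sum_eq_zero fun v _ => Finset.sum_eq_zero fun u _ => ?_
        simp only [toepL, Matrix.of_apply]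
        rw [if_neg haj, zero_mul, zero_mul]
    calc (toepL r n * MID * toepU r n) (j, x) (k, y)
        = ∑ a : Fin (n+1),
            (if (a : ℕ) ≤ (j : ℕ) then (∑ b : Fin (n+1), if (b : ℕ) ≤ (k : ℕ) then
            (r ((j : ℕ) - (a : ℕ)) * (s ((a : ℕ) + (b : ℕ) + 2)
              - s ((a : ℕ)+1) * sInv * s ((b : ℕ)+1)) * r ((k : ℕ) - (b : ℕ))) x y
            else 0) else 0) := by
          rw [e1, e2]
          refine Finset.sum_congr rfl fun a _ => ?_
          by_cases haj : (a : ℕ) ≤ (j : ℕ)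
          · rw [if_pos haj]
            refine Finset.sum_congr rfl fun b _ => ?_
            rw [e3 a b, if_pos haj]
          · rw [if_neg haj]
            refine Finset.sum_eq_zero fun b _ => ?_
            rw [e3 a b, if_neg haj]
      _ = ∑ a ∈ Finset.range ((j : ℕ)+1), ∑ b ∈ Finset.range ((k : ℕ)+1),
            (r ((j : ℕ) - a) * (s (a + b + 2) - s (a+1) * sInv * s (b+1)) * r ((k : ℕ) - b)) x y := by
          refine Eq.trans (aux_fin_ite_sum n (j : ℕ) (by omega) (fun a => ∑ b : Fin (n+1),
            (if (b : ℕ) ≤ (k : ℕ) then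
            (r ((j : ℕ) - a) * (s (a + (b : ℕ) + 2)
              - s (a+1) * sInv * s ((b : ℕ)+1)) * r ((k : ℕ) - (b : ℕ))) x y
            else 0))) ?_
          refine Finset.sum_congr rfl fun a ha => ?_
          rw [Finset.mem_range] at ha
          exact aux_fin_ite_sum n (k : ℕ) (by omega) (fun b =>
            (r ((j : ℕ) - a) * (s (a + b + 2)
              - s (a+1) * sInv * s (b+1)) * r ((k : ℕ) - b)) x y)
  show hank r 2 n (j, x) (k, y) = _
  rw [Matrix.neg_apply, hE]
  show r ((j : ℕ) + (k : ℕ) + 2) x y = _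
  rw [aux_main_seq κ s sInv r hmp hr0 hr (j : ℕ) (k : ℕ) hjk]
  rw [Matrix.neg_apply, Matrix.sum_apply]
  congr 1
  refine Finset.sum_congr rfl fun a _ => ?_
  rw [Matrix.sum_apply]
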